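/- arXiv:1503.00607 — 6 statements merged into one kernel-verified Lean document; each statement's English description precedes it below -/
import Mathlib

section
/- Let 0 ≤ d ≤ n−1 and let X = (x₁,…,x_{n−d}) be n−d indeterminates. Given a set B = {β₁,…,β_n} of n pairwise distinct elements of K, the family of the binom(n,d) polynomials {R(X,B') : B' ⊆ B, |B'| = d} is a basis of the K-vector space S_{(n−d,d)}. -/
/-! Order the complement of a `d`-subset `C` of indices and let `p_C` be the point listing the
`b j`, `j ∉ C`. Then `R(p_C, b(B)) ≠ 0` iff `B = C`, so evaluation at the points `p_C` is
diagonal on the family, which is therefore linearly independent. A symmetric polynomial of degree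
`≤ d` in each variable that vanishes at every `p_C` vanishes at every tuple of `n - d` distinct
values of `b`, hence is zero by induction on the number of variables: in the first variable it
is a polynomial of degree `≤ d` with at least `d + 1` roots. So evaluation is injective on
`S_{(n-d,d)}`, and the family spans it. -/

noncomputable section

def SymSub (K : Type*) [Field K] (ℓ d : ℕ) : Submodule K (MvPolynomial (Fin ℓ) K) where
  carrier := {h | h.IsSymmetric ∧ ∀ i, h.degreeOf i ≤ d}
  add_mem' := by
    rintro p q ⟨hp1, hp2⟩ ⟨hq1, hq2⟩
    exact ⟨hp1.add hq1,
      fun i => le_trans (MvPolynomial.degreeOf_add_le i p q) (max_le (hp2 i) (hq2 i))⟩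
  zero_mem' := by
    refine ⟨?_, fun i => by simp⟩
    intro e; simp
  smul_mem' := by
    rintro c p ⟨hp1, hp2⟩
    refine ⟨hp1.smul c, fun i => ?_⟩
    rw [MvPolynomial.smul_eq_C_mul]
    exact le_trans (MvPolynomial.degreeOf_C_mul_le p i c) (hp2 i)

open MvPolynomial Function

theorem Submodule.span_range_eq_of_injOn {R M N ι : Type*} [Semiring R] [AddCommMonoid M]
    [AddCommMonoid N] [Module R M] [Module R N] {Φ : M →ₗ[R] N} {W : Submodule R M}
    {v : ι → M} (hv : ∀ i, v i ∈ W) (hΦ : Set.InjOn Φ W)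
    (hspan : Submodule.span R (Set.range (Φ ∘ v)) = ⊤) :
    Submodule.span R (Set.range v) = W := by
  have hle : Submodule.span R (Set.range v) ≤ W :=
    Submodule.span_le.2 (Set.range_subset_iff.2 hv)
  refine le_antisymm hle fun w hw => ?_
  have hΦw : Φ w ∈ (Submodule.span R (Set.range v)).map Φ := by
    rw [Submodule.map_span, ← Set.range_comp, hspan]
    exact Submodule.mem_top
  obtain ⟨u, hu, hΦu⟩ := hΦw
  rwa [← hΦ (hle hu) hw hΦu]

namespace MvPolynomial

theorem eq_zero_of_eval_comp_injective_eq_zero {R ι : Type*} [CommRing R] [IsDomain R]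
    [Fintype ι] {b : ι → R} (hb : Injective b) {d : ℕ} :
    ∀ {ℓ : ℕ} {P : MvPolynomial (Fin ℓ) R}, (∀ i, P.degreeOf i ≤ d) → ℓ + d ≤ Fintype.card ι →
      (∀ y : Fin ℓ → ι, Injective y → eval (b ∘ y) P = 0) → P = 0
  | 0, P, _, _, hP => by
    obtain ⟨a, rfl⟩ := C_surjective (Fin 0) P
    simpa using hP finZeroElim (fun i => i.elim0)
  | ℓ + 1, P, hdeg, hcard, hP => by
    classical
    suffices finSuccEquiv R ℓ P = 0 by simpa using this
    refine Polynomial.ext fun m => ?_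
    rw [Polynomial.coeff_zero]
    refine eq_zero_of_eval_comp_injective_eq_zero hb
      (fun i => (degreeOf_coeff_finSuccEquiv P i m).trans (hdeg i.succ)) (by omega)
      fun y hy => ?_
    -- as a polynomial in the first variable, `P(·, b ∘ y)` vanishes at the more than `d`
    -- values of `b` outside `b ∘ y`
    suffices Polynomial.map (eval (b ∘ y)) (finSuccEquiv R ℓ P) = 0 by
      simpa using congrArg (Polynomial.coeff · m) this
    refine Polynomial.eq_zero_of_natDegree_lt_card_of_eval_eq_zero _
      (f := fun t : {t // t ∉ Set.range y} => b t) (hb.comp Subtype.val_injective)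
      (fun t => ?_) ?_
    · rw [← eval_eq_eval_mv_eval', ← Fin.comp_cons]
      exact hP _ (Fin.cons_injective_iff.2 ⟨t.2, hy⟩)
    · calc (Polynomial.map (eval (b ∘ y)) (finSuccEquiv R ℓ P)).natDegree
          ≤ (finSuccEquiv R ℓ P).natDegree := Polynomial.natDegree_map_le
        _ = P.degreeOf 0 := natDegree_finSuccEquiv P
        _ ≤ d := hdeg 0
        _ < Fintype.card ι - ℓ := by omega
        _ = Fintype.card {t // t ∉ Set.range y} := by
          rw [Fintype.card_subtype_compl, Set.card_range_of_injective hy, Fintype.card_fin]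

theorem IsSymmetric.eval_eq_of_range_eq {σ R : Type*} [CommSemiring R] {P : MvPolynomial σ R}
    (hP : P.IsSymmetric) {x y : σ → R} (hx : Injective x) (hy : Injective y)
    (hxy : Set.range x = Set.range y) : eval x P = eval y P := by
  let e : Equiv.Perm σ :=
    (Equiv.ofInjective x hx).trans ((Equiv.setCongr hxy).trans (Equiv.ofInjective y hy).symm)
  have hye : y ∘ e = x := by ext s; simp [e, Equiv.apply_ofInjective_symm]
  rw [← hye, ← eval_rename, hP e]

theorem eq_zero_of_isSymmetric_of_eval_compl_eq_zero {R ι : Type*} [CommRing R] [IsDomain R]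
    [Fintype ι] [LinearOrder ι] {b : ι → R} (hb : Injective b) {ℓ d : ℕ}
    {P : MvPolynomial (Fin ℓ) R} (hsym : P.IsSymmetric) (hdeg : ∀ i, P.degreeOf i ≤ d)
    (hcard : ℓ + d ≤ Fintype.card ι)
    (hP : ∀ (C : Finset ι) (hC : Cᶜ.card = ℓ), eval (b ∘ Cᶜ.orderEmbOfFin hC) P = 0) :
    P = 0 := by
  refine eq_zero_of_eval_comp_injective_eq_zero hb hdeg hcard fun y hy => ?_
  have hC : (Finset.univ.image y)ᶜᶜ.card = ℓ := by
    rw [compl_compl, Finset.card_image_of_injective _ hy, Finset.card_fin]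
  rw [hsym.eval_eq_of_range_eq (hb.comp hy) (hb.comp (Finset.orderEmbOfFin _ hC).injective)]
  · exact hP _ hC
  · simp [Set.range_comp, Finset.range_orderEmbOfFin]

variable {σ ι K : Type*} [Fintype σ] [CommRing K]

/-- The polynomial `R(X, b(B))`. -/
def prodXSubC (b : ι → K) (B : Finset ι) : MvPolynomial σ K :=
  ∏ s, ∏ j ∈ B, (X s - C (b j))

@[simp]
theorem eval_prodXSubC (b : ι → K) (B : Finset ι) (x : σ → K) :
    eval x (prodXSubC b B) = ∏ s, ∏ j ∈ B, (x s - b j) := by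
  simp [prodXSubC]

theorem isSymmetric_prodXSubC (b : ι → K) (B : Finset ι) :
    (prodXSubC b B : MvPolynomial σ K).IsSymmetric := fun e => by
  simpa [prodXSubC, map_prod] using Equiv.prod_comp e fun t => ∏ j ∈ B, (X t - C (b j))

theorem degreeOf_prodXSubC_le [Nontrivial K] (b : ι → K) (B : Finset ι) (i : σ) :
    (prodXSubC b B : MvPolynomial σ K).degreeOf i ≤ B.card := by
  classical
  have hfactor (s : σ) (c : K) : degreeOf i (X s - C c) ≤ if i = s then 1 else 0 := by
    simpa [degreeOf_X, degreeOf_C] using degreeOf_sub_le i (X s) (C c)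
  calc degreeOf i (prodXSubC b B : MvPolynomial σ K)
      ≤ ∑ s, ∑ j ∈ B, degreeOf i (X s - C (b j)) :=
        (degreeOf_prod_le _ _ _).trans <| Finset.sum_le_sum fun s _ => degreeOf_prod_le _ _ _
    _ ≤ ∑ s, ∑ j ∈ B, if i = s then 1 else 0 := by gcongr with s _ j _; exact hfactor s (b j)
    _ = B.card := by simp

theorem eval_comp_prodXSubC_eq_zero_iff [IsDomain K] {b : ι → K} (hb : Injective b)
    (B : Finset ι) (y : σ → ι) :
    eval (b ∘ y) (prodXSubC b B) = 0 ↔ ∃ s, y s ∈ B := by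
  simp [Finset.prod_eq_zero_iff, sub_eq_zero, hb.eq_iff]

theorem eval_comp_prodXSubC_eq_zero_iff_ne [IsDomain K] [DecidableEq ι] [Fintype ι]
    {b : ι → K} (hb : Injective b) {B C : Finset ι} (hBC : B.card = C.card) {y : σ → ι}
    (hy : Set.range y = ↑Cᶜ) :
    eval (b ∘ y) (prodXSubC b B) = 0 ↔ B ≠ C := by
  have hrange (j : ι) : (∃ s, y s = j) ↔ j ∉ C := by simpa using Set.ext_iff.1 hy j
  have hmeets : (∃ s, y s ∈ B) ↔ ¬ B ⊆ C := by
    rw [Finset.not_subset]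
    exact ⟨fun ⟨s, hs⟩ => ⟨y s, hs, (hrange _).1 ⟨s, rfl⟩⟩,
      fun ⟨j, hj, hjC⟩ => let ⟨s, hs⟩ := (hrange j).2 hjC; ⟨s, hs ▸ hj⟩⟩
  rw [eval_comp_prodXSubC_eq_zero_iff hb, hmeets, Finset.subset_iff_eq_of_card_le hBC.ge]

end MvPolynomial

theorem prodXSubC_mem_symSub {K ι : Type*} [Field K] {ℓ d : ℕ} (b : ι → K) {B : Finset ι}
    (hB : B.card ≤ d) : prodXSubC b B ∈ SymSub K ℓ d :=
  ⟨isSymmetric_prodXSubC b B, fun i => (degreeOf_prodXSubC_le b B i).trans hB⟩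

/-- For `0 ≤ d ≤ n-1` and `B = {β₁,…,β_n}` pairwise distinct in `K`, the family of the
`binom(n,d)` polynomials `R(X,B') = ∏_{s, j∈B'} (x_s - β_j)`, for `B' ⊆ B` with `|B'| = d`,
is a basis of `S_{(n-d,d)}`. -/
theorem symmetric_lagrange_basis (K : Type*) [Field K] (n d : ℕ) (hd : d < n)
    (b : Fin n → K) (hb : Function.Injective b) :
    LinearIndependent K
      (fun B' : {s : Finset (Fin n) // s.card = d} =>
        (∏ s : Fin (n - d), ∏ j ∈ B'.1,
          (MvPolynomial.X s - MvPolynomial.C (b j)) : MvPolynomial (Fin (n - d)) K)) ∧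
    Submodule.span K
      (Set.range (fun B' : {s : Finset (Fin n) // s.card = d} =>
        (∏ s : Fin (n - d), ∏ j ∈ B'.1,
          (MvPolynomial.X s - MvPolynomial.C (b j)) : MvPolynomial (Fin (n - d)) K)))
      = SymSub K (n - d) d := by
  classical
  have hcompl (C : {s : Finset (Fin n) // s.card = d}) : C.1ᶜ.card = n - d := by
    rw [Finset.card_compl, Fintype.card_fin, C.2]
  let pt (C : {s : Finset (Fin n) // s.card = d}) : Fin (n - d) → K :=
    b ∘ C.1ᶜ.orderEmbOfFin (hcompl C)
  have hpt (B C : {s : Finset (Fin n) // s.card = d}) :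
      eval (pt C) (prodXSubC b B.1) = 0 ↔ B ≠ C := by
    rw [eval_comp_prodXSubC_eq_zero_iff_ne hb (B.2.trans C.2.symm)
      (Finset.range_orderEmbOfFin _ _), Ne, Subtype.coe_inj]
  let Φ := LinearMap.pi (R := K) fun C => (aeval (pt C)).toLinearMap
  have hunit (B) : IsUnit (eval (pt B) (prodXSubC b B.1)) :=
    isUnit_iff_ne_zero.2 fun h => (hpt B B).1 h rfl
  have hdiag : Φ ∘ (fun B => prodXSubC b B.1) = (Pi.basisFun K _).isUnitSMul hunit := by
    ext B C
    rcases eq_or_ne C B with rfl | h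
    · simp [Φ, Module.Basis.isUnitSMul_apply, Pi.basisFun_apply]
    · simp [Φ, Module.Basis.isUnitSMul_apply, Pi.basisFun_apply, h, (hpt B C).2 h.symm]
  have hinj : Set.InjOn Φ (SymSub K (n - d) d) := by
    refine LinearMap.injOn_of_disjoint_ker subset_rfl
      (Submodule.disjoint_def.2 fun P ⟨hsym, hdeg⟩ hker => ?_)
    refine eq_zero_of_isSymmetric_of_eval_compl_eq_zero hb hsym hdeg
      (by rw [Fintype.card_fin]; omega) fun C hC => ?_
    have hCd : C.card = d := by
      have := C.card_compl_add_card; rw [hC, Fintype.card_fin] at this; omega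
    exact congrFun (LinearMap.mem_ker.1 hker) ⟨C, hCd⟩
  exact ⟨LinearIndependent.of_comp Φ (hdiag ▸ Module.Basis.linearIndependent _),
    Submodule.span_range_eq_of_injOn (fun B => prodXSubC_mem_symSub b B.2.le) hinj
      (hdiag ▸ Module.Basis.span_eq _)⟩

end
end

section
/- Let 0 ≤ d ≤ n−1, let X = (x₁,…,x_{n−d}) be n−d indeterminates, and let B = {β₁,…,β_n} be a set of n pairwise distinct elements of K. Then every polynomial h ∈ S_{(n−d,d)} satisfies h(X) = Σ_{B'⊆B, |B'|=d} h(B∖B') · R(X,B') / R(B∖B', B'), where h(B∖B') denotes the evaluation of h at the n−d elements of B∖B' (in any order, since h is symmetric). -/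
/-!
Both sides have degree at most `d` in each of the `n - d` variables, so their difference vanishes
once it vanishes at every point `x` with pairwise distinct coordinates in `B` (induction on the
number of variables: a nonzero univariate polynomial of degree `≤ d` has at most `d` roots among
the `≥ d + 1` remaining elements of `B`). At such a point `x`, every summand with `B' ≠ B ∖ {x_s}`
contains a factor `x_s - β_j = 0`, and the summand `B' = B ∖ {x_s}` equals `h(x)` by symmetry.
-/

noncomputable section

/-- `R(Y,Z) := ∏_{y∈Y, z∈Z} (y - z)`, for the finite families indexed by `S` and `T`. -/
def RR {K : Type*} [CommRing K] {ι κ : Type*} (S : Finset ι) (T : Finset κ)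
    (y : ι → K) (z : κ → K) : K :=
  ∏ i ∈ S, ∏ j ∈ T, (y i - z j)

open Function Finset MvPolynomial

theorem RR_ne_zero {R ι : Type*} [CommRing R] [IsDomain R] {y : ι → R}
    (hy : Injective y) {S T : Finset ι} (hST : Disjoint S T) : RR S T y y ≠ 0 :=
  prod_ne_zero_iff.mpr fun _ hi => prod_ne_zero_iff.mpr fun _ hj hij =>
    disjoint_left.mp hST hi (hy (sub_eq_zero.mp hij) ▸ hj)

namespace MvPolynomial

theorem eq_zero_of_degreeOf_le_of_eval_comp_eq_zero {R ι : Type*} [CommRing R] [IsDomain R]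
    [Fintype ι] {b : ι → R} (hb : Injective b) {ℓ d : ℕ} (hcard : ℓ + d ≤ Fintype.card ι)
    {f : MvPolynomial (Fin ℓ) R} (hdeg : ∀ i, f.degreeOf i ≤ d)
    (hf : ∀ σ : Fin ℓ → ι, Injective σ → eval (b ∘ σ) f = 0) : f = 0 := by
  classical
  induction ℓ with
  | zero =>
    have hf0 := hf Fin.elim0 (injective_of_subsingleton _)
    rw [eq_C_of_isEmpty f, eval_C] at hf0
    rw [eq_C_of_isEmpty f, hf0, map_zero]
  | succ ℓ ih =>
    suffices finSuccEquiv R ℓ f = 0 by simpa using this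
    ext1 k
    refine ih (by omega) (fun i => (degreeOf_coeff_finSuccEquiv f i k).trans (hdeg i.succ))
      fun τ hτ => ?_
    have hspec : Polynomial.map (eval (b ∘ τ)) (finSuccEquiv R ℓ f) = 0 := by
      refine Polynomial.eq_zero_of_natDegree_lt_card_of_eval_eq_zero' _
        ((univ \ univ.image τ).image b) ?_ ?_
      · simp only [mem_image, mem_sdiff, mem_univ, true_and, not_exists]
        rintro _ ⟨t, ht, rfl⟩
        rw [← eval_eq_eval_mv_eval', ← Fin.comp_cons]
        exact hf _ (Fin.cons_injective_of_injective (by simpa using ht) hτ)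
      · have := natDegree_finSuccEquiv f ▸ hdeg 0
        rw [card_image_of_injective _ hb, card_sdiff_of_subset (subset_univ _),
          card_image_of_injective _ hτ, card_univ, card_univ, Fintype.card_fin]
        exact Polynomial.natDegree_map_le.trans_lt (by omega)
    simpa using congrArg (Polynomial.coeff · k) hspec

theorem IsSymmetric.eval_comp_eq_of_range_eq {R σ ι : Type*} [CommSemiring R]
    {f : MvPolynomial σ R} (hf : f.IsSymmetric) {u v : σ → ι} (hu : Injective u)
    (hv : Injective v) (huv : Set.range u = Set.range v) (x : ι → R) :
    eval (x ∘ u) f = eval (x ∘ v) f := by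
  let π : Equiv.Perm σ :=
    (Equiv.ofInjective v hv).trans ((Equiv.setCongr huv.symm).trans (Equiv.ofInjective u hu).symm)
  have hπ : u ∘ π = v := by ext i; simp [π, Equiv.apply_ofInjective_symm]
  rw [← hπ, ← comp_assoc, ← eval_rename (⇑π), hf π]

theorem degreeOf_prod_prod_X_sub_C_le {R σ ι : Type*} [CommRing R] [Fintype σ]
    (T : Finset ι) (c : ι → R) (i : σ) :
    degreeOf i (∏ s, ∏ j ∈ T, (X s - C (c j))) ≤ #T := by
  classical
  have hfactor (s : σ) (j : ι) : degreeOf i (X s - C (c j)) ≤ if i = s then 1 else 0 := by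
    refine (degreeOf_sub_le i _ _).trans (max_le ?_ ((degreeOf_C _ i).trans_le (Nat.zero_le _)))
    rw [degreeOf_def, ← Multiset.count_singleton]
    exact Multiset.count_le_of_le i (degrees_X' s)
  calc degreeOf i (∏ s, ∏ j ∈ T, (X s - C (c j)))
      ≤ ∑ s, ∑ j ∈ T, if i = s then 1 else 0 :=
        (degreeOf_prod_le i _ _).trans <| sum_le_sum fun s _ =>
          (degreeOf_prod_le i _ _).trans <| sum_le_sum fun j _ => hfactor s j
    _ = #T := by simp

end MvPolynomial

section SymmetricLagrange

variable {K : Type*} [Field K] {n : ℕ} (b : Fin n → K)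

section Term

variable {m : ℕ} (h : MvPolynomial (Fin m) K)

/-- `h(B∖B') · R(X,B') / R(B∖B',B')`, with the points of `B ∖ B'` fed to `h` in increasing order
of their indices. -/
def symmLagrangeTerm (B' : Finset (Fin n)) (hB' : #B'ᶜ = m) : MvPolynomial (Fin m) K :=
  C (eval (fun i => b (B'ᶜ.orderIsoOfFin hB' i)) h / RR B'ᶜ B' b b) *
    ∏ s, ∏ j ∈ B', (X s - C (b j))

theorem degreeOf_symmLagrangeTerm_le (B' : Finset (Fin n)) (hB' : #B'ᶜ = m) (i : Fin m) :
    degreeOf i (symmLagrangeTerm b h B' hB') ≤ #B' :=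
  (degreeOf_C_mul_le _ i _).trans (degreeOf_prod_prod_X_sub_C_le _ _ i)

theorem eval_symmLagrangeTerm_eq_zero {B' : Finset (Fin n)} (hB' : #B'ᶜ = m) {x : Fin m → K}
    {s : Fin m} {j : Fin n} (hj : j ∈ B') (hxs : x s = b j) :
    eval x (symmLagrangeTerm b h B' hB') = 0 := by
  simp only [symmLagrangeTerm, map_mul, eval_C, map_prod, map_sub, eval_X]
  exact mul_eq_zero_of_right _ <| prod_eq_zero (mem_univ s) <| prod_eq_zero hj (by simp [hxs])

theorem eval_symmLagrangeTerm_of_compl_eq_image (hb : Injective b) (hh : h.IsSymmetric)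
    {σ : Fin m → Fin n} (hσ : Injective σ) {B' : Finset (Fin n)} (hB' : #B'ᶜ = m)
    (hσB' : B'ᶜ = univ.image σ) :
    eval (b ∘ σ) (symmLagrangeTerm b h B' hB') = eval (b ∘ σ) h := by
  have hprod : ∏ s, ∏ j ∈ B', (b (σ s) - b j) = RR B'ᶜ B' b b := by
    rw [hσB', RR, prod_image hσ.injOn]
  have hrange : Set.range (B'ᶜ.orderEmbOfFin hB') = Set.range σ := by
    rw [range_orderEmbOfFin, hσB', coe_image, coe_univ, Set.image_univ]
  simp only [symmLagrangeTerm, map_mul, eval_C, map_prod, map_sub, eval_X, comp_apply, hprod]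
  rw [div_mul_cancel₀ _ (RR_ne_zero hb disjoint_compl_left)]
  exact hh.eval_comp_eq_of_range_eq (B'ᶜ.orderEmbOfFin hB').injective hσ hrange b

end Term

def symmLagrangeInterpolant {d : ℕ} (h : MvPolynomial (Fin (n - d)) K) :
    MvPolynomial (Fin (n - d)) K :=
  ∑ B' : {s : Finset (Fin n) // #s = d},
    symmLagrangeTerm b h B'.1 (by rw [card_compl, B'.2, Fintype.card_fin])

theorem degreeOf_symmLagrangeInterpolant_le {d : ℕ} (h : MvPolynomial (Fin (n - d)) K)
    (i : Fin (n - d)) : degreeOf i (symmLagrangeInterpolant b h) ≤ d :=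
  (degreeOf_sum_le i _ _).trans <| Finset.sup_le fun B' _ =>
    (degreeOf_symmLagrangeTerm_le b h B'.1 _ i).trans_eq B'.2

theorem eval_symmLagrangeInterpolant {d : ℕ} (hdn : d ≤ n) (hb : Injective b)
    {h : MvPolynomial (Fin (n - d)) K} (hh : h.IsSymmetric) {σ : Fin (n - d) → Fin n}
    (hσ : Injective σ) : eval (b ∘ σ) (symmLagrangeInterpolant b h) = eval (b ∘ σ) h := by
  classical
  set A := (univ.image σ)ᶜ
  have hA : #A = d := by
    simp only [A, card_compl, card_image_of_injective _ hσ, card_univ, Fintype.card_fin]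
    omega
  rw [symmLagrangeInterpolant, map_sum, sum_eq_single ⟨A, hA⟩]
  · exact eval_symmLagrangeTerm_of_compl_eq_image b h hb hh hσ _ (compl_compl _)
  · rintro ⟨B', hB'⟩ - hne
    have hnsub : ¬ B' ⊆ A := fun hsub =>
      hne (Subtype.ext (eq_of_subset_of_card_le hsub (by rw [hA, hB'])))
    obtain ⟨j, hj, hjA⟩ := not_subset.mp hnsub
    obtain ⟨s, -, rfl⟩ := mem_image.mp (notMem_compl.mp hjA)
    exact eval_symmLagrangeTerm_eq_zero b h _ hj rfl
  · simp

end SymmetricLagrange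

/-- Symmetric Lagrange interpolation: for `0 ≤ d ≤ n-1` and `B = {β₁,…,β_n}` pairwise
distinct, every symmetric polynomial `h` in `n-d` variables of degree at most `d` in each
variable satisfies `h(X) = Σ_{B'⊆B, |B'|=d} h(B∖B') · R(X,B') / R(B∖B', B')`. -/
theorem symmetric_lagrange_interpolation (K : Type*) [Field K] (n d : ℕ) (hd : d < n)
    (b : Fin n → K) (hb : Function.Injective b)
    (h : MvPolynomial (Fin (n - d)) K) (hsym : h.IsSymmetric)
    (hdeg : ∀ i, h.degreeOf i ≤ d) :
    h = ∑ B' : {s : Finset (Fin n) // s.card = d},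
      MvPolynomial.C
        (MvPolynomial.eval
            (fun i => b ((B'.1ᶜ.orderIsoOfFin
              (by simp [Finset.card_compl, B'.2] : B'.1ᶜ.card = n - d)) i).1) h
          / RR B'.1ᶜ B'.1 b b) *
        ∏ s : Fin (n - d), ∏ j ∈ B'.1, (MvPolynomial.X s - MvPolynomial.C (b j)) := by
  change h = symmLagrangeInterpolant b h
  refine sub_eq_zero.mp (eq_zero_of_degreeOf_le_of_eval_comp_eq_zero hb (d := d)
    (by simp only [Fintype.card_fin]; omega) (fun i => ?_) fun σ hσ => ?_)
  · exact (degreeOf_sub_le i _ _).trans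
      (max_le (hdeg i) (degreeOf_symmLagrangeInterpolant_le b h i))
  · rw [map_sub, eval_symmLagrangeInterpolant b hd.le hb hsym hσ, sub_self]

end
end

section
/- Let A be a set of m pairwise distinct elements of K, let 0 ≤ p ≤ m, let X = (x₁,…,x_r) be r indeterminates with r ≤ m−p, and let B be a set of at least p pairwise distinct elements of K. Then Σ_{A'⊆A, |A'|=p} R(A∖A', B) · R(X,A') / R(A∖A', A') = Σ_{B'⊆B, |B'|=p} R(A, B∖B') · R(X,B') / R(B', B∖B'), as an identity of polynomials in the variables X. -/
/-!
Both sides have the shape `∑_{#S = p} c_S · R(X, S)`, so they have degree `≤ p` in `X 0`.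
Induct on `m` with `r = m - p` variables: substituting `X 0 = a j` kills the left-hand terms with
`j ∈ A'`, and on both sides what remains is `∏_k (a j - b k)` times the identity for `A ∖ {a j}` in
the other variables. Agreement at the `m > p` points `a j` forces agreement in `X 0`. Fewer
variables follow by comparing the coefficients of `X 0 ^ p`.

In the base case `m = p`, `r = 0` the claim is `∑_{B'} R(A, B∖B') / R(B', B∖B') = 1`. Up to a sign
that cancels, this is the left side of the identity with `A` and `B` exchanged. In that identity
`#B = p`, so its right side is the single term `R(X, A)`, and it follows from the same induction
on `#B`.
-/

noncomputable section

namespace ExchangeLemma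

open Finset MvPolynomial

variable {K : Type*} [Field K]

/-- `R(X, (y i)_{i ∈ S})` for the indeterminates `X = (X 0, …, X (r - 1))`. -/
def RX (r : ℕ) {ι : Type*} (S : Finset ι) (y : ι → K) : MvPolynomial (Fin r) K :=
  ∏ s : Fin r, ∏ i ∈ S, (X s - C (y i))

lemma finSuccEquiv_C (r : ℕ) (k : K) : finSuccEquiv K r (C k) = Polynomial.C (C k) := by
  simpa only [algebraMap_eq, Polynomial.algebraMap_apply] using (finSuccEquiv K r).commutes k

lemma finSuccEquiv_RX {r : ℕ} {ι : Type*} (S : Finset ι) (y : ι → K) :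
    finSuccEquiv K r (RX (r + 1) S y) =
      Polynomial.C (RX r S y) * ∏ i ∈ S, (Polynomial.X - Polynomial.C (C (y i))) := by
  simp only [RX, Fin.prod_univ_succ, map_mul, map_prod, map_sub, finSuccEquiv_X_zero,
    finSuccEquiv_X_succ, finSuccEquiv_C]
  ring

lemma RX_map {r : ℕ} {ι κ : Type*} (e : ι ↪ κ) (S : Finset ι) (y : κ → K) :
    RX r (S.map e) y = RX r S (y ∘ e) := by
  simp only [RX, prod_map, Function.comp_apply]

def subsetSum {ι : Type*} [Fintype ι] (p r : ℕ) (c : Finset ι → K) (y : ι → K) :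
    MvPolynomial (Fin r) K :=
  ∑ S ∈ powersetCard p univ, C (c S) * RX r S y

section subsetSum

variable {ι : Type*} [Fintype ι] {p r : ℕ}

lemma subsetSum_congr {c d : Finset ι → K} (h : ∀ S : Finset ι, #S = p → c S = d S)
    (y : ι → K) : subsetSum p r c y = subsetSum p r d y :=
  sum_congr rfl fun S hS => by rw [h S (mem_powersetCard_univ.mp hS)]

lemma subsetSum_of_card_eq (h : Fintype.card ι = p)
    (c : Finset ι → K) (y : ι → K) : subsetSum p r c y = C (c univ) * RX r univ y := by
  rw [subsetSum, ← h, ← card_univ, powersetCard_self, sum_singleton]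

lemma subsetSum_const_mul (k : K) (c : Finset ι → K) (y : ι → K) :
    subsetSum p r (fun S => k * c S) y = C k * subsetSum p r c y := by
  simp only [subsetSum, map_mul, mul_sum, mul_assoc]

lemma natDegree_finSuccEquiv_subsetSum_le (c : Finset ι → K) (y : ι → K) :
    (finSuccEquiv K r (subsetSum p (r + 1) c y)).natDegree ≤ p := by
  rw [subsetSum, map_sum]
  refine Polynomial.natDegree_sum_le_of_forall_le _ _ fun S hS => ?_
  rw [map_mul, finSuccEquiv_RX, finSuccEquiv_C, ← mul_assoc, ← Polynomial.C_mul]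
  refine Polynomial.natDegree_C_mul_le _ _ |>.trans ?_
  rw [Polynomial.natDegree_finsetProd_X_sub_C_eq_card, mem_powersetCard_univ.mp hS]

lemma coeff_finSuccEquiv_subsetSum (c : Finset ι → K) (y : ι → K) :
    (finSuccEquiv K r (subsetSum p (r + 1) c y)).coeff p = subsetSum p r c y := by
  rw [subsetSum, map_sum, Polynomial.finsetSum_coeff]
  refine sum_congr rfl fun S hS => ?_
  rw [map_mul, finSuccEquiv_RX, finSuccEquiv_C, ← mul_assoc, ← Polynomial.C_mul,
    Polynomial.coeff_C_mul, ← mem_powersetCard_univ.mp hS,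
    ← Polynomial.natDegree_finsetProd_X_sub_C_eq_card S fun i => C (y i),
    (Polynomial.monic_prod_X_sub_C _ S).coeff_natDegree, mul_one]

lemma eval_finSuccEquiv_subsetSum (c : Finset ι → K) (y : ι → K) (v : K) :
    (finSuccEquiv K r (subsetSum p (r + 1) c y)).eval (C v) =
      subsetSum p r (fun S => c S * ∏ i ∈ S, (v - y i)) y := by
  simp only [subsetSum, map_sum, Polynomial.eval_finsetSum, map_mul, finSuccEquiv_RX,
    Polynomial.eval_mul, Polynomial.eval_C, Polynomial.eval_prod, Polynomial.eval_sub,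
    Polynomial.eval_X, finSuccEquiv_C, map_prod, map_sub]
  exact sum_congr rfl fun S _ => by ring

lemma subsetSum_eq_of_succ {κ : Type*} [Fintype κ] {c : Finset ι → K} {y : ι → K}
    {d : Finset κ → K} {z : κ → K} (h : subsetSum p (r + 1) c y = subsetSum p (r + 1) d z) :
    subsetSum p r c y = subsetSum p r d z := by
  rw [← coeff_finSuccEquiv_subsetSum, h, coeff_finSuccEquiv_subsetSum]

lemma subsetSum_eq_of_forall_eval {κ ν : Type*} [Fintype κ] [Fintype ν] {c : Finset ι → K}
    {y : ι → K} {d : Finset κ → K} {z : κ → K} {x : ν → K} (hx : Function.Injective x)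
    (hp : p < Fintype.card ν)
    (h : ∀ j, subsetSum p r (fun S => c S * ∏ i ∈ S, (x j - y i)) y =
      subsetSum p r (fun S => d S * ∏ i ∈ S, (x j - z i)) z) :
    subsetSum p (r + 1) c y = subsetSum p (r + 1) d z := by
  refine (finSuccEquiv K r).injective <|
    Polynomial.eq_of_natDegree_lt_card_of_eval_eq _ _ ((C_injective _ K).comp hx) (fun j => ?_) ?_
  · simpa only [Function.comp_apply, eval_finSuccEquiv_subsetSum] using h j
  · exact max_le (natDegree_finSuccEquiv_subsetSum_le c y) (natDegree_finSuccEquiv_subsetSum_le d z)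
      |>.trans_lt hp

end subsetSum

lemma subsetSum_succAbove {n p r : ℕ} (j : Fin (n + 1)) {c : Finset (Fin (n + 1)) → K}
    (hc : ∀ S, j ∈ S → c S = 0) (y : Fin (n + 1) → K) :
    subsetSum p r c y = subsetSum p r (fun S => c (S.map j.succAboveEmb)) (y ∘ j.succAbove) := by
  have hsub : powersetCard p (univ.map j.succAboveEmb) ⊆ powersetCard p univ :=
    powersetCard_mono (subset_univ _)
  rw [subsetSum, ← sum_subset hsub, powersetCard_map, sum_map]
  · exact sum_congr rfl fun S _ => by
      rw [RelEmbedding.coe_toEmbedding, mapEmbedding_apply, RX_map, Fin.coe_succAboveEmb]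
  · intro S hS hS'
    suffices j ∈ S by rw [hc S this, map_zero, zero_mul]
    contrapose! hS'
    refine mem_powersetCard.2 ⟨fun x hx => ?_, (mem_powersetCard_univ.1 hS)⟩
    obtain ⟨x, rfl⟩ := Fin.exists_succAbove_eq (ne_of_mem_of_not_mem hx hS')
    exact mem_map_of_mem _ (mem_univ x)

section RR

variable {ι κ : Type*}

@[simp] lemma RR_empty_left (T : Finset κ) (y : ι → K) (z : κ → K) : RR ∅ T y z = 1 := by
  simp [RR]

@[simp] lemma RR_empty_right (S : Finset ι) (y : ι → K) (z : κ → K) : RR S ∅ y z = 1 := by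
  simp [RR]

lemma RR_cons_left {j : ι} {S : Finset ι} (hj : j ∉ S) (T : Finset κ) (y : ι → K)
    (z : κ → K) : RR (cons j S hj) T y z = (∏ k ∈ T, (y j - z k)) * RR S T y z :=
  prod_cons hj

lemma RR_map_left {ν : Type*} (e : ν ↪ ι) (S : Finset ν) (T : Finset κ) (y : ι → K)
    (z : κ → K) : RR (S.map e) T y z = RR S T (y ∘ e) z :=
  prod_map _ _ _

lemma RR_map_right {ν : Type*} (e : ν ↪ κ) (S : Finset ι) (T : Finset ν) (y : ι → K)
    (z : κ → K) : RR S (T.map e) y z = RR S T y (z ∘ e) :=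
  prod_congr rfl fun _ _ => prod_map _ _ _

lemma RR_comm (S : Finset ι) (T : Finset κ) (y : ι → K) (z : κ → K) :
    RR S T y z = (-1) ^ (#S * #T) * RR T S z y := by
  rw [RR, RR, prod_comm, pow_mul, ← prod_const, ← prod_mul_distrib]
  refine prod_congr rfl fun k _ => ?_
  rw [← prod_const, ← prod_mul_distrib]
  exact prod_congr rfl fun i _ => by ring

end RR

lemma compl_map_succAboveEmb {n : ℕ} (j : Fin (n + 1)) (S : Finset (Fin n)) :
    (S.map j.succAboveEmb)ᶜ = cons j (Sᶜ.map j.succAboveEmb) (by simp) := by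
  ext x
  rcases Fin.eq_self_or_eq_succAbove j x with rfl | ⟨x, rfl⟩ <;> simp

section Weights

variable {m nb : ℕ}

def leftWeight (a : Fin m → K) (b : Fin nb → K) (A' : Finset (Fin m)) : K :=
  RR A'ᶜ univ a b / RR A'ᶜ A' a a

def rightWeight (a : Fin m → K) (b : Fin nb → K) (B' : Finset (Fin nb)) : K :=
  RR univ B'ᶜ a b / RR B' B'ᶜ b b

lemma leftWeight_map_succAbove {a : Fin (m + 1) → K} (ha : Function.Injective a)
    (b : Fin nb → K) (j : Fin (m + 1)) (S : Finset (Fin m)) :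
    leftWeight a b (S.map j.succAboveEmb) * ∏ i ∈ S.map j.succAboveEmb, (a j - a i) =
      (∏ k, (a j - b k)) * leftWeight (a ∘ j.succAbove) b S := by
  have hw : ∏ i ∈ S.map j.succAboveEmb, (a j - a i) ≠ 0 :=
    prod_ne_zero_iff.2 fun i hi => sub_ne_zero.2 <| ha.ne <|
      (ne_of_mem_of_not_mem hi (by simp)).symm
  rw [leftWeight, leftWeight, compl_map_succAboveEmb, RR_cons_left, RR_cons_left, RR_map_left,
    RR_map_left, RR_map_right, Fin.coe_succAboveEmb]
  field_simp

lemma rightWeight_mul_prod (a : Fin (m + 1) → K) (b : Fin nb → K) (j : Fin (m + 1))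
    (B' : Finset (Fin nb)) :
    rightWeight a b B' * ∏ k ∈ B', (a j - b k) =
      (∏ k, (a j - b k)) * rightWeight (a ∘ j.succAbove) b B' := by
  rw [rightWeight, rightWeight, Fin.univ_succAbove m j, RR_cons_left, RR_map_left,
    Fin.coe_succAboveEmb, ← prod_mul_prod_compl B' fun k => a j - b k]
  ring

lemma rightWeight_eq_leftWeight {p : ℕ} (a : Fin p → K) (b : Fin nb → K) {B' : Finset (Fin nb)}
    (hB' : #B' = p) : rightWeight a b B' = leftWeight b a B' := by
  rw [rightWeight, leftWeight, RR_comm univ B'ᶜ a b, RR_comm B' B'ᶜ b b, card_univ,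
    Fintype.card_fin, hB', mul_div_mul_left _ _ (pow_ne_zero _ (neg_ne_zero.2 one_ne_zero))]

end Weights

def ExchangeIdentity {m nb : ℕ} (p r : ℕ) (a : Fin m → K) (b : Fin nb → K) : Prop :=
  subsetSum p r (leftWeight a b) a = subsetSum p r (rightWeight a b) b

namespace ExchangeIdentity

variable {m nb p : ℕ}

lemma of_le {r r' : ℕ} {a : Fin m → K} {b : Fin nb → K} (h : ExchangeIdentity p r' a b)
    (hr : r ≤ r') : ExchangeIdentity p r a b := by
  induction r', hr using Nat.le_induction with
  | base => exact h
  | succ r' _ ih => exact ih (subsetSum_eq_of_succ h)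

lemma succ_of_succAbove {r : ℕ} (hp : p ≤ m) {a : Fin (m + 1) → K} (ha : Function.Injective a)
    (b : Fin nb → K) (h : ∀ j : Fin (m + 1), ExchangeIdentity p r (a ∘ j.succAbove) b) :
    ExchangeIdentity p (r + 1) a b := by
  refine subsetSum_eq_of_forall_eval ha (by rw [Fintype.card_fin]; omega) fun j => ?_
  have hvanish : ∀ A', j ∈ A' → leftWeight a b A' * ∏ i ∈ A', (a j - a i) = 0 :=
    fun A' hj => mul_eq_zero_of_right _ (prod_eq_zero hj (sub_self _))
  simp_rw [subsetSum_succAbove j hvanish, leftWeight_map_succAbove ha, rightWeight_mul_prod,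
    subsetSum_const_mul]
  rw [h j]

end ExchangeIdentity

lemma subsetSum_leftWeight_of_card_eq {p nb r : ℕ} (a : Fin p → K) (b : Fin nb → K) :
    subsetSum p r (leftWeight a b) a = RX r univ a := by
  simp [subsetSum_of_card_eq, leftWeight]

lemma subsetSum_rightWeight_of_card_eq {m p r : ℕ} (a : Fin m → K) (b : Fin p → K) :
    subsetSum p r (rightWeight a b) b = RX r univ b := by
  simp [subsetSum_of_card_eq, rightWeight]

lemma exchangeIdentity_sub_of_base {p nb : ℕ} {b : Fin nb → K}
    (hbase : ∀ a : Fin p → K, ExchangeIdentity p 0 a b) {m : ℕ} (hp : p ≤ m) {a : Fin m → K}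
    (ha : Function.Injective a) : ExchangeIdentity p (m - p) a b := by
  induction m, hp using Nat.le_induction with
  | base => simpa using hbase a
  | succ m hpm ih =>
    rw [Nat.sub_add_comm hpm]
    exact ExchangeIdentity.succ_of_succAbove hpm ha b fun j =>
      ih (ha.comp Fin.succAbove_right_injective)

lemma exchangeIdentity_zero_of_card_eq {p nb : ℕ} (a : Fin p → K) {b : Fin nb → K}
    (hB : p ≤ nb) (hb : Function.Injective b) : ExchangeIdentity p 0 a b := by
  have hswap : ExchangeIdentity p 0 b a :=
    (exchangeIdentity_sub_of_base (fun b' => by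
      rw [ExchangeIdentity, subsetSum_leftWeight_of_card_eq, subsetSum_rightWeight_of_card_eq]
      simp [RX]) hB hb).of_le (Nat.zero_le _)
  rw [ExchangeIdentity, subsetSum_congr (fun B' hB' => rightWeight_eq_leftWeight a b hB'), hswap,
    subsetSum_leftWeight_of_card_eq, subsetSum_rightWeight_of_card_eq]

theorem exchangeIdentity {m p r nb : ℕ} (hp : p ≤ m) (hr : r ≤ m - p) (hB : p ≤ nb)
    {a : Fin m → K} (ha : Function.Injective a) {b : Fin nb → K} (hb : Function.Injective b) :
    ExchangeIdentity p r a b :=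
  (exchangeIdentity_sub_of_base (fun a' => exchangeIdentity_zero_of_card_eq a' hB hb) hp
    ha).of_le hr

end ExchangeLemma

/-- Exchange Lemma with `r ≤ m - p` variables: for `A` of size `m`, `0 ≤ p ≤ m`,
`X = (x₁,…,x_r)` indeterminates with `r ≤ m-p`, and `B` of size `≥ p`, one has
`Σ_{A'⊆A,|A'|=p} R(A∖A',B)·R(X,A')/R(A∖A',A') = Σ_{B'⊆B,|B'|=p} R(A,B∖B')·R(X,B')/R(B',B∖B')`
as polynomials in `X`. -/
theorem exchange_lemma_few_variables (K : Type*) [Field K] (m p r nb : ℕ)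
    (hp : p ≤ m) (hr : r ≤ m - p) (hB : p ≤ nb)
    (a : Fin m → K) (ha : Function.Injective a)
    (b : Fin nb → K) (hb : Function.Injective b) :
    ∑ A' ∈ Finset.powersetCard p (Finset.univ : Finset (Fin m)),
      MvPolynomial.C (RR A'ᶜ (Finset.univ : Finset (Fin nb)) a b / RR A'ᶜ A' a a) *
        ∏ s : Fin r, ∏ i ∈ A', (MvPolynomial.X s - MvPolynomial.C (a i))
    = ∑ B' ∈ Finset.powersetCard p (Finset.univ : Finset (Fin nb)),
      MvPolynomial.C (RR (Finset.univ : Finset (Fin m)) B'ᶜ a b / RR B' B'ᶜ b b) *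
        ∏ s : Fin r, ∏ j ∈ B', (MvPolynomial.X s - MvPolynomial.C (b j)) :=
  ExchangeLemma.exchangeIdentity hp hr hB ha hb

end
end

section
/- Let A be a set of m pairwise distinct elements of K, let 0 ≤ d ≤ m, let X = (x₁,…,x_r) be r indeterminates with r ≤ m−d, and let B be a set of exactly d pairwise distinct elements of K. Then Σ_{A'⊆A, |A'|=d} R(A∖A', B) · R(X,A') / R(A∖A', A') = R(X,B), as an identity of polynomials in the variables X. -/
/-!
Write `c_A(A') = R(A∖A',B) / R(A∖A',A')` and `p_{A'} = ∏_{i∈A'} (X - aᵢ)`, so that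
`R(X,A') = ∏ₛ p_{A'}(xₛ)`, and view both sides as polynomials in `x₁` over the polynomials in the
other variables. Both have degree at most `|B| < |A|` in `x₁`. At `x₁ = a_k` the summands with
`k ∈ A'` vanish, and for `k ∉ A'` splitting the factor `k` off `A ∖ A'` gives
`c_A(A') p_{A'}(a_k) = R(a_k,B) c_{A∖k}(A')`; so the left side becomes `R(a_k,B)` times the left
side for `A ∖ {k}` in the remaining `r - 1` variables, and by induction on `r` both sides agree at
the `|A|` points `a_k`. For `r = 0` the same interpolation with constant weights, read off at the
coefficient of `X^|B|`, gives `∑ c_A(A') = 1` by induction on `|A|`.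
-/

noncomputable section

open Finset Polynomial Lagrange

theorem RR_insert_left {R ι κ : Type*} [CommRing R] [DecidableEq ι] {S : Finset ι} {k : ι}
    (hk : k ∉ S) (T : Finset κ) (y : ι → R) (z : κ → R) :
    RR (insert k S) T y z = (nodal T z).eval (y k) * RR S T y z := by
  rw [RR, prod_insert hk, eval_nodal, RR]

theorem coeff_nodal_card {R ι : Type*} [CommRing R] (s : Finset ι) (v : ι → R) :
    (nodal s v).coeff #s = 1 := by
  nontriviality R
  simpa [natDegree_nodal] using (nodal_monic (s := s) (v := v)).coeff_natDegree

theorem finSuccEquiv_prod_aeval_X {R : Type*} [CommRing R] (r : ℕ) (p : R[X]) :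
    MvPolynomial.finSuccEquiv R r (∏ s : Fin (r + 1), aeval (MvPolynomial.X s) p) =
      C (∏ s : Fin r, aeval (MvPolynomial.X s) p) * p.map (algebraMap R _) := by
  have aeval_C_eq (x : MvPolynomial (Fin r) R) : aeval (C x) p = C (aeval x p) :=
    aeval_algebraMap_apply _ x p
  simp only [Fin.prod_univ_succ, map_mul, map_prod, ← aeval_algHom_apply,
    MvPolynomial.finSuccEquiv_X_zero, MvPolynomial.finSuccEquiv_X_succ, aeval_X_left_eq_map,
    aeval_C_eq, mul_comm]

section Exchange

variable {K ι κ : Type*} [Field K] [DecidableEq ι]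

def exchangeCoeff (A : Finset ι) (B : Finset κ) (a : ι → K) (b : κ → K)
    (A' : Finset ι) : K :=
  RR (A \ A') B a b / RR (A \ A') A' a a

theorem exchangeCoeff_self (A : Finset ι) (B : Finset κ) (a : ι → K) (b : κ → K) :
    exchangeCoeff A B a b A = 1 := by
  simp [exchangeCoeff, RR]

theorem exchangeCoeff_mul_eval_nodal {A A' : Finset ι} {k : ι} (hA' : A' ⊆ A) (hk : k ∈ A)
    (hkA' : k ∉ A') {a : ι → K} (ha : Set.InjOn a A) (B : Finset κ) (b : κ → K) :
    exchangeCoeff A B a b A' * (nodal A' a).eval (a k) =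
      (nodal B b).eval (a k) * exchangeCoeff (A.erase k) B a b A' := by
  have hsdiff : A \ A' = insert k (A.erase k \ A') := by
    rw [erase_sdiff_comm, insert_erase (mem_sdiff.mpr ⟨hk, hkA'⟩)]
  have hk' : k ∉ A.erase k \ A' := by simp
  have hne : (nodal A' a).eval (a k) ≠ 0 := by
    rw [eval_nodal, prod_ne_zero_iff]
    intro i hi
    exact sub_ne_zero.mpr fun h => hkA' (ha hk (hA' hi) h ▸ hi)
  rw [exchangeCoeff, exchangeCoeff, hsdiff, RR_insert_left hk', RR_insert_left hk',
    mul_div_mul_comm]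
  field_simp

theorem sum_exchangeCoeff_mul_nodal_map {S : Type*} [CommRing S] [IsDomain S] [Algebra K S]
    {A : Finset ι} {B : Finset κ} (hAB : #B < #A) {a : ι → K} (ha : Set.InjOn a A) (b : κ → K)
    (w : Finset ι → S) (u : S)
    (hw : ∀ k ∈ A, ∑ A' ∈ (A.erase k).powersetCard #B,
      algebraMap K S (exchangeCoeff (A.erase k) B a b A') * w A' = u) :
    ∑ A' ∈ A.powersetCard #B,
        C (algebraMap K S (exchangeCoeff A B a b A') * w A') * (nodal A' a).map (algebraMap K S) =
      C u * (nodal B b).map (algebraMap K S) := by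
  have hinj : Set.InjOn (algebraMap K S ∘ a) A :=
    (FaithfulSMul.algebraMap_injective K S).comp_injOn ha
  have hdeg {p : K[X]} (hp : p.natDegree ≤ #B) (c : S) :
      (C c * p.map (algebraMap K S)).natDegree ≤ #B :=
    (natDegree_C_mul_le _ _).trans <| natDegree_map_le.trans hp
  have hlt {p : S[X]} (hp : p.natDegree ≤ #B) : p.degree < #A :=
    degree_le_natDegree.trans_lt (by exact_mod_cast hp.trans_lt hAB)
  refine eq_of_degrees_lt_of_eval_index_eq A hinj
    (hlt <| natDegree_sum_le_of_forall_le _ _ fun A' hA' =>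
      hdeg (natDegree_nodal.trans_le (mem_powersetCard.mp hA').2.le) _)
    (hlt <| hdeg natDegree_nodal.le u) fun k hk => ?_
  simp only [Function.comp_apply, eval_finsetSum, eval_mul, eval_C, eval_map_apply]
  rw [← sum_subset (powersetCard_mono (erase_subset k A)) fun A' hA' hA'k => ?_]
  · rw [← hw k hk, sum_mul]
    refine sum_congr rfl fun A' hA' => ?_
    have hA'sub := (mem_powersetCard.mp hA').1
    rw [mul_right_comm, ← map_mul, exchangeCoeff_mul_eval_nodal
      (hA'sub.trans (erase_subset k A)) hk (fun h => by simpa using hA'sub h) ha, map_mul]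
    ring
  · obtain ⟨hA'A, hA'B⟩ := mem_powersetCard.mp hA'
    have hkA' : k ∈ A' := by
      by_contra hkA'
      exact hA'k (mem_powersetCard.mpr ⟨subset_erase.mpr ⟨hA'A, hkA'⟩, hA'B⟩)
    rw [eval_nodal_at_node hkA', map_zero, mul_zero]

theorem sum_exchangeCoeff_eq_one {A : Finset ι} {B : Finset κ} (hAB : #B ≤ #A) {a : ι → K}
    (ha : Set.InjOn a A) (b : κ → K) :
    ∑ A' ∈ A.powersetCard #B, exchangeCoeff A B a b A' = 1 := by
  obtain ⟨n, hn⟩ := Nat.exists_eq_add_of_le hAB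
  clear hAB
  induction n generalizing A with
  | zero => rw [add_zero] at hn; rw [← hn, powersetCard_self, sum_singleton, exchangeCoeff_self]
  | succ n ih =>
    have hinterp := sum_exchangeCoeff_mul_nodal_map (S := K) (A := A) (B := B) (by omega) ha b
      (fun _ => 1) 1 fun k hk => by
        simpa using ih (A := A.erase k) (ha.mono (erase_subset k A))
          (by rw [card_erase_of_mem hk]; omega)
    -- every `nodal A' a` is monic of degree `#B`
    have hcoeff := congrArg (coeff · #B) hinterp
    simp only [Algebra.algebraMap_self, RingHom.id_apply, mul_one, map_id, finsetSum_coeff,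
      coeff_C_mul, map_one, one_mul] at hcoeff
    rw [← coeff_nodal_card B b, ← hcoeff]
    refine sum_congr rfl fun A' hA' => ?_
    rw [← (mem_powersetCard.mp hA').2, coeff_nodal_card, mul_one]

theorem sum_exchangeCoeff_mul_prod_aeval_nodal (r : ℕ) {A : Finset ι} {B : Finset κ}
    (hAB : r + #B ≤ #A) {a : ι → K} (ha : Set.InjOn a A) (b : κ → K) :
    ∑ A' ∈ A.powersetCard #B, MvPolynomial.C (exchangeCoeff A B a b A') *
        ∏ s : Fin r, aeval (MvPolynomial.X s) (nodal A' a) =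
      ∏ s : Fin r, aeval (MvPolynomial.X s) (nodal B b) := by
  induction r generalizing A with
  | zero =>
    simp only [univ_eq_empty, prod_empty, mul_one]
    rw [← map_sum, sum_exchangeCoeff_eq_one (by omega) ha b, map_one]
  | succ r ih =>
    have hinterp := sum_exchangeCoeff_mul_nodal_map (A := A) (B := B) (by omega) ha b
      (fun A' => ∏ s : Fin r, aeval (MvPolynomial.X s) (nodal A' a))
      (∏ s : Fin r, aeval (MvPolynomial.X s) (nodal B b)) fun k hk => by
        rw [MvPolynomial.algebraMap_eq]
        exact ih (by rw [card_erase_of_mem hk]; omega) (ha.mono (erase_subset k A))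
    apply (MvPolynomial.finSuccEquiv K r).injective
    rw [← MvPolynomial.algebraMap_eq]
    simp only [map_sum, map_mul, AlgEquiv.commutes, finSuccEquiv_prod_aeval_X,
      Polynomial.algebraMap_apply, ← hinterp]
    exact sum_congr rfl fun A' _ => by ring

end Exchange

theorem exchange_lemma_card_eq_general (K : Type*) [Field K] (m d r : ℕ)
    (hd : d ≤ m) (hr : r ≤ m - d)
    (a : Fin m → K) (ha : Function.Injective a)
    (b : Fin d → K) :
    ∑ A' ∈ Finset.powersetCard d (Finset.univ : Finset (Fin m)),
      MvPolynomial.C (RR A'ᶜ (Finset.univ : Finset (Fin d)) a b / RR A'ᶜ A' a a) *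
        ∏ s : Fin r, ∏ i ∈ A', (MvPolynomial.X s - MvPolynomial.C (a i))
    = ∏ s : Fin r, ∏ j : Fin d, (MvPolynomial.X s - MvPolynomial.C (b j)) := by
  have h := sum_exchangeCoeff_mul_prod_aeval_nodal r (A := univ) (B := (univ : Finset (Fin d)))
    (by simp only [card_univ, Fintype.card_fin]; omega) ha.injOn b
  simpa only [nodal_eq, map_prod, map_sub, aeval_X, aeval_C, MvPolynomial.algebraMap_eq, card_univ,
    Fintype.card_fin, exchangeCoeff, compl_eq_univ_sdiff] using h

/-- Exchange Lemma in the case `|B| = d`: for `A` of size `m`, `0 ≤ d ≤ m`,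
`X = (x₁,…,x_r)` indeterminates with `r ≤ m-d`, and `B` of size exactly `d`, one has
`Σ_{A'⊆A,|A'|=d} R(A∖A',B)·R(X,A')/R(A∖A',A') = R(X,B)` as polynomials in `X`. -/
theorem exchange_lemma_card_eq (K : Type*) [Field K] (m d r : ℕ)
    (hd : d ≤ m) (hr : r ≤ m - d)
    (a : Fin m → K) (ha : Function.Injective a)
    (b : Fin d → K) (hb : Function.Injective b) :
    ∑ A' ∈ Finset.powersetCard d (Finset.univ : Finset (Fin m)),
      MvPolynomial.C (RR A'ᶜ (Finset.univ : Finset (Fin d)) a b / RR A'ᶜ A' a a) *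
        ∏ s : Fin r, ∏ i ∈ A', (MvPolynomial.X s - MvPolynomial.C (a i))
    = ∏ s : Fin r, ∏ j : Fin d, (MvPolynomial.X s - MvPolynomial.C (b j)) :=
  exchange_lemma_card_eq_general K m d r hd hr a ha b

end
end

section
/- Let 0 ≤ p ≤ m, 0 ≤ q ≤ n and set d := p+q. If d ≤ min{m−1, n−1}, then Syl_{p,q}(A,B) = (−1)^{p(m−d)} · binom(d,p) · Syl_{0,d}(A,B) in K[x]. -/
noncomputable section

/-- `R(x,S) := ∏_{c∈S} (x - c)` as a polynomial in the single variable `x`. -/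
def RX {K : Type*} [CommRing K] {ι : Type*} (S : Finset ι) (y : ι → K) : Polynomial K :=
  ∏ i ∈ S, (Polynomial.X - Polynomial.C (y i))

/-- The monic polynomial `∏ᵢ (x - aᵢ)` with roots `a₁,…,a_m`. -/
def fpoly {K : Type*} [CommRing K] {m : ℕ} (a : Fin m → K) : Polynomial K :=
  ∏ i, (Polynomial.X - Polynomial.C (a i))

/-- The Sylvester double sum
`Syl_{p,q}(A,B)(x) = Σ_{A'⊆A,|A'|=p; B'⊆B,|B'|=q}
  R(A',B')·R(A∖A',B∖B')·R(x,A')·R(x,B') / (R(A',A∖A')·R(B',B∖B'))`. -/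
def Syl {K : Type*} [Field K] {m n : ℕ} (a : Fin m → K) (b : Fin n → K) (p q : ℕ) :
    Polynomial K :=
  ∑ A' ∈ Finset.powersetCard p (Finset.univ : Finset (Fin m)),
    ∑ B' ∈ Finset.powersetCard q (Finset.univ : Finset (Fin n)),
      Polynomial.C (RR A' B' a b * RR A'ᶜ B'ᶜ a b / (RR A' A'ᶜ a a * RR B' B'ᶜ b b)) *
        RX A' a * RX B' b

/-! Fix `A''` with `|A''| = p`, `B'` with `|B'| = q`, and put `P = R(x,A'') R(x,B')`. On the nodes
`A ∖ A'' ⊔ B ∖ B'` the Lagrange weights `w_t = P(t) / ∏_{u ≠ t} (t - u)` satisfy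
`∑ w_t = ∑ w_t t = 0`, because `deg P + 2` is less than the number of nodes (this is where
`p + q < min m n` enters), i.e. `∑_t w_t (x - t) = 0`. Adding a root `α` to `A''`, or `β` to
`B'`, multiplies the coefficient of the Sylvester summand by `(-1)^p w_α`, resp.
`(-1)^(m+q) w_β`, so summing over `A''` and `B'` gives
`(-1)^p (p+1) Syl_{p+1,q} + (-1)^(m+q) (q+1) Syl_{p,q+1} = 0`, and induction on `p` yields the
formula when `A ∪ B` has `m + n` elements and `K` has characteristic zero.

The general case is a specialization. Let `L` be the localization of `ℤ[a, b]` at the nonzero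
polynomials whose value at the given roots is a unit of `K`. Then `L` embeds into the fraction
field of `ℤ[a, b]`, where the formula holds for the indeterminates, and `L` maps to `K`, sending
the indeterminates to the given roots; `sylRing` writes the double sum with `Ring.inverse` so
that both ring homomorphisms act on it summand by summand. -/

open Finset Polynomial

section RR
variable {R : Type*} [CommRing R] {ι κ : Type*} {y : ι → R} {z : κ → R} {S : Finset ι}
  {T : Finset κ}

lemma RR_insert_left_s10 [DecidableEq ι] {i : ι} (h : i ∉ S) :
    RR (insert i S) T y z = (∏ j ∈ T, (y i - z j)) * RR S T y z :=
  prod_insert h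

lemma RR_insert_right [DecidableEq κ] {j : κ} (h : j ∉ T) :
    RR S (insert j T) y z = (∏ i ∈ S, (y i - z j)) * RR S T y z := by
  simp only [RR, prod_insert h, prod_mul_distrib]

lemma RR_eq_mul_RR_erase_left [DecidableEq ι] {i : ι} (h : i ∈ S) :
    RR S T y z = (∏ j ∈ T, (y i - z j)) * RR (S.erase i) T y z := by
  rw [← RR_insert_left_s10 (notMem_erase i S), insert_erase h]

lemma RR_eq_mul_RR_erase_right [DecidableEq κ] {j : κ} (h : j ∈ T) :
    RR S T y z = (∏ i ∈ S, (y i - z j)) * RR S (T.erase j) y z := by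
  rw [← RR_insert_right (notMem_erase j T), insert_erase h]

lemma RR_ne_zero_s10 [NoZeroDivisors R] [Nontrivial R]
    (h : ∀ i ∈ S, ∀ j ∈ T, y i ≠ z j) : RR S T y z ≠ 0 :=
  prod_ne_zero_iff.mpr fun _ hi => prod_ne_zero_iff.mpr fun _ hj => sub_ne_zero.mpr (h _ hi _ hj)

lemma RR_compl_ne_zero [NoZeroDivisors R] [Nontrivial R] [Fintype ι] [DecidableEq ι]
    (hy : Function.Injective y) (S : Finset ι) : RR S Sᶜ y y ≠ 0 :=
  RR_ne_zero_s10 fun _ hi _ hj => hy.ne fun e => mem_compl.mp hj (e ▸ hi)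

lemma map_RR {R' G : Type*} [CommRing R'] [FunLike G R R'] [RingHomClass G R R'] (φ : G)
    (S : Finset ι) (T : Finset κ) (y : ι → R) (z : κ → R) :
    φ (RR S T y z) = RR S T (φ ∘ y) (φ ∘ z) := by
  simp [RR, map_prod]

lemma eval_RX (c : R) (S : Finset ι) : (RX S y).eval c = ∏ i ∈ S, (c - y i) := by
  simp [RX, eval_prod]

lemma RX_insert [DecidableEq ι] {i : ι} (h : i ∉ S) :
    RX (insert i S) y = (X - C (y i)) * RX S y :=
  prod_insert h

lemma map_RX {R' : Type*} [CommRing R'] (φ : R →+* R') (S : Finset ι) (y : ι → R) :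
    (RX S y).map φ = RX S (φ ∘ y) := by
  simp [RX, Polynomial.map_prod]

end RR

lemma prod_sub_comm {R : Type*} [CommRing R] {ι : Type*} (S : Finset ι) (f : ι → R) (c : R) :
    ∏ i ∈ S, (f i - c) = (-1) ^ #S * ∏ i ∈ S, (c - f i) := by
  rw [← prod_const, ← prod_mul_distrib]
  exact prod_congr rfl fun i _ => by ring

section Lagrange
variable {F : Type*} [Field F] {ι : Type*} [DecidableEq ι]

def lagrangeWeight (s : Finset ι) (v : ι → F) (P : F[X]) (i : ι) : F :=
  P.eval (v i) / ∏ j ∈ s.erase i, (v i - v j)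

lemma sum_lagrangeWeight_eq_zero {s : Finset ι} {v : ι → F} (hvs : Set.InjOn v s) {P : F[X]}
    (hP : P.natDegree + 1 < #s) : ∑ i ∈ s, lagrangeWeight s v P i = 0 := by
  have hdeg : P.degree < ↑(#s - 1) :=
    degree_le_natDegree.trans_lt (by exact_mod_cast (by omega : P.natDegree < #s - 1))
  rw [← coeff_eq_zero_of_degree_lt hdeg, Lagrange.coeff_eq_sum hvs (hdeg.trans_le (by simp))]
  rfl

lemma sum_C_lagrangeWeight_mul_X_sub_C_eq_zero {s : Finset ι} {v : ι → F} (hvs : Set.InjOn v s)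
    {P : F[X]} (hP : P.natDegree + 2 < #s) :
    ∑ i ∈ s, C (lagrangeWeight s v P i) * (X - C (v i)) = 0 := by
  have h₀ := sum_lagrangeWeight_eq_zero hvs (P := P) (by omega)
  have h₁ := sum_lagrangeWeight_eq_zero hvs (P := X * P) <| by
    have := natDegree_mul_le (p := X) (q := P)
    have := natDegree_X_le (R := F)
    omega
  have hX : ∀ i, lagrangeWeight s v (X * P) i = lagrangeWeight s v P i * v i := fun i => by
    simp only [lagrangeWeight, eval_mul, eval_X]; ring
  simp only [hX] at h₁
  simp only [mul_sub, ← C_mul, sum_sub_distrib, ← sum_mul, ← map_sum, h₀, h₁, map_zero,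
    zero_mul, sub_zero]

end Lagrange

lemma erase_disjSum_inl {ι κ : Type*} [DecidableEq ι] [DecidableEq κ] (s : Finset ι)
    (t : Finset κ) (i : ι) : (s.disjSum t).erase (.inl i) = (s.erase i).disjSum t := by
  ext (x | x) <;> simp

lemma erase_disjSum_inr {ι κ : Type*} [DecidableEq ι] [DecidableEq κ] (s : Finset ι)
    (t : Finset κ) (j : κ) : (s.disjSum t).erase (.inr j) = s.disjSum (t.erase j) := by
  ext (x | x) <;> simp

lemma sum_powersetCard_succ_nsmul {M γ : Type*} [AddCommMonoid M] [Fintype γ] [DecidableEq γ]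
    (p : ℕ) (f : Finset γ → M) :
    ∑ A ∈ powersetCard (p + 1) (univ : Finset γ), (p + 1) • f A =
      ∑ A ∈ powersetCard p (univ : Finset γ), ∑ α ∈ Aᶜ, f (insert α A) := by
  have hcard : ∀ A ∈ powersetCard (p + 1) (univ : Finset γ), (p + 1) • f A = ∑ _α ∈ A, f A :=
    fun A hA => by rw [sum_const, (mem_powersetCard.mp hA).2]
  rw [sum_congr rfl hcard, sum_sigma', sum_sigma']
  refine sum_nbij' (fun x => ⟨x.1.erase x.2, x.2⟩) (fun x => ⟨insert x.2 x.1, x.2⟩)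
    ?_ ?_ ?_ ?_ ?_
  · rintro ⟨A, α⟩ hx
    simp only [mem_sigma, mem_powersetCard_univ] at hx ⊢
    simp [card_erase_of_mem hx.2, hx.1]
  · rintro ⟨A, α⟩ hx
    simp only [mem_sigma, mem_powersetCard_univ, mem_compl] at hx ⊢
    simp [card_insert_of_notMem hx.2, hx.1]
  · rintro ⟨A, α⟩ hx
    simp [insert_erase (mem_sigma.mp hx).2]
  · rintro ⟨A, α⟩ hx
    simp [erase_insert (mem_compl.mp (mem_sigma.mp hx).2)]
  · rintro ⟨A, α⟩ hx
    simp [insert_erase (mem_sigma.mp hx).2]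

section Exchange
variable {F : Type*} [Field F] {m n : ℕ} (a : Fin m → F) (b : Fin n → F)

def sylCoeff (A' : Finset (Fin m)) (B' : Finset (Fin n)) : F :=
  RR A' B' a b * RR A'ᶜ B'ᶜ a b / (RR A' A'ᶜ a a * RR B' B'ᶜ b b)

def sylTerm (A' : Finset (Fin m)) (B' : Finset (Fin n)) : F[X] :=
  C (sylCoeff a b A' B') * RX A' a * RX B' b

lemma Syl_eq_sum_sylTerm (p q : ℕ) :
    Syl a b p q = ∑ A' ∈ powersetCard p univ, ∑ B' ∈ powersetCard q univ, sylTerm a b A' B' :=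
  rfl

variable {a b} (hv : Function.Injective (Sum.elim a b))
include hv

lemma neg_one_pow_mul_sylCoeff_insert_left {A' : Finset (Fin m)} (B' : Finset (Fin n))
    {α : Fin m} (hα : α ∉ A') :
    (-1) ^ #A' * sylCoeff a b (insert α A') B' =
      sylCoeff a b A' B' *
        lagrangeWeight (A'ᶜ.disjSum B'ᶜ) (Sum.elim a b) (RX A' a * RX B' b) (.inl α) := by
  have hαc : α ∈ A'ᶜ := mem_compl.mpr hα
  have hne : ∀ t u, t ≠ u → Sum.elim a b t - Sum.elim a b u ≠ 0 := fun t u h =>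
    sub_ne_zero.mpr (hv.ne h)
  have h₁ : RR A' (A'ᶜ.erase α) a a ≠ 0 :=
    RR_ne_zero_s10 fun i hi j hj => sub_ne_zero.mp (hne (.inl i) (.inl j) (by grind [mem_compl]))
  have h₂ : RR B' B'ᶜ b b ≠ 0 := RR_compl_ne_zero (hv.comp Sum.inr_injective) B'
  have h₃ : ∏ j ∈ A'ᶜ.erase α, (a α - a j) ≠ 0 :=
    prod_ne_zero_iff.mpr fun j hj => hne (.inl α) (.inl j) (by grind)
  have h₄ : ∏ j ∈ B'ᶜ, (a α - b j) ≠ 0 :=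
    prod_ne_zero_iff.mpr fun j _ => hne (.inl α) (.inr j) (by simp)
  have h₅ : ∏ i ∈ A', (a α - a i) ≠ 0 :=
    prod_ne_zero_iff.mpr fun i hi => hne (.inl α) (.inl i) (by grind)
  simp only [sylCoeff, lagrangeWeight, compl_insert, erase_disjSum_inl, prod_disjSum,
    Sum.elim_inl, Sum.elim_inr, eval_mul, eval_RX]
  rw [RR_insert_left_s10 hα, RR_insert_left_s10 hα, RR_eq_mul_RR_erase_left hαc,
    RR_eq_mul_RR_erase_right hαc, prod_sub_comm A' a (a α)]
  have hsq : ((-1 : F) ^ #A') ^ 2 = 1 := by rw [← pow_mul, pow_mul', neg_one_sq, one_pow]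
  field_simp
  linear_combination (∏ j ∈ B', (a α - b j)) * RR A' B' a b * RR (A'ᶜ.erase α) B'ᶜ a b * hsq

lemma neg_one_pow_mul_sylCoeff_insert_right (A' : Finset (Fin m)) {B' : Finset (Fin n)}
    {β : Fin n} (hβ : β ∉ B') :
    (-1) ^ (m + #B') * sylCoeff a b A' (insert β B') =
      sylCoeff a b A' B' *
        lagrangeWeight (A'ᶜ.disjSum B'ᶜ) (Sum.elim a b) (RX A' a * RX B' b) (.inr β) := by
  have hβc : β ∈ B'ᶜ := mem_compl.mpr hβ
  have hne : ∀ t u, t ≠ u → Sum.elim a b t - Sum.elim a b u ≠ 0 := fun t u h =>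
    sub_ne_zero.mpr (hv.ne h)
  have h₁ : RR A' A'ᶜ a a ≠ 0 := RR_compl_ne_zero (hv.comp Sum.inl_injective) A'
  have h₂ : RR B' (B'ᶜ.erase β) b b ≠ 0 :=
    RR_ne_zero_s10 fun i hi j hj => sub_ne_zero.mp (hne (.inr i) (.inr j) (by grind [mem_compl]))
  have h₃ : ∏ j ∈ B'ᶜ.erase β, (b β - b j) ≠ 0 :=
    prod_ne_zero_iff.mpr fun j hj => hne (.inr β) (.inr j) (by grind)
  have h₄ : ∏ i ∈ A'ᶜ, (b β - a i) ≠ 0 :=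
    prod_ne_zero_iff.mpr fun i _ => hne (.inr β) (.inl i) (by simp)
  have h₅ : ∏ j ∈ B', (b β - b j) ≠ 0 :=
    prod_ne_zero_iff.mpr fun j hj => hne (.inr β) (.inr j) (by grind)
  simp only [sylCoeff, lagrangeWeight, compl_insert, erase_disjSum_inr, prod_disjSum,
    Sum.elim_inl, Sum.elim_inr, eval_mul, eval_RX]
  rw [RR_insert_right hβ, RR_insert_left_s10 hβ, RR_eq_mul_RR_erase_right hβc,
    RR_eq_mul_RR_erase_right hβc, prod_sub_comm A' a (b β), prod_sub_comm A'ᶜ a (b β),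
    prod_sub_comm B' b (b β), card_compl, Fintype.card_fin]
  have hsign : (-1 : F) ^ (m + #B') * (-1) ^ #A' * (-1) ^ #B' = (-1) ^ (m - #A') := by
    have : #A' ≤ m := card_le_univ A' |>.trans_eq (Fintype.card_fin m)
    rw [← pow_add, ← pow_add]
    exact neg_one_pow_congr (by simp only [Nat.even_iff]; omega)
  field_simp
  linear_combination (∏ i ∈ A', (b β - a i)) * RR A' B' a b * RR A'ᶜ (B'ᶜ.erase β) a b * hsign

lemma signed_sum_sylTerm_insert_eq_zero (A' : Finset (Fin m)) (B' : Finset (Fin n))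
    (hsize : #A' + #B' + 3 ≤ #A'ᶜ + #B'ᶜ) :
    C ((-1) ^ #A') * ∑ α ∈ A'ᶜ, sylTerm a b (insert α A') B' +
      C ((-1) ^ (m + #B')) * ∑ β ∈ B'ᶜ, sylTerm a b A' (insert β B') = 0 := by
  set w := lagrangeWeight (A'ᶜ.disjSum B'ᶜ) (Sum.elim a b) (RX A' a * RX B' b)
  have hres : ∑ t ∈ A'ᶜ.disjSum B'ᶜ, C (w t) * (X - C (Sum.elim a b t)) = 0 := by
    refine sum_C_lagrangeWeight_mul_X_sub_C_eq_zero hv.injOn ?_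
    have : (RX A' a * RX B' b).natDegree ≤ #A' + #B' := natDegree_mul_le.trans (by simp [RX])
    rw [card_disjSum]
    omega
  have hleft : ∀ α ∈ A'ᶜ, C ((-1) ^ #A') * sylTerm a b (insert α A') B' =
      C (sylCoeff a b A' B') * (RX A' a * RX B' b) * (C (w (.inl α)) * (X - C (a α))) := by
    intro α hα
    have hc : C ((-1) ^ #A') * C (sylCoeff a b (insert α A') B') =
        C (sylCoeff a b A' B') * C (w (.inl α)) := by
      rw [← map_mul, ← map_mul, neg_one_pow_mul_sylCoeff_insert_left hv B' (mem_compl.mp hα)]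
    rw [sylTerm, RX_insert (mem_compl.mp hα)]
    linear_combination (X - C (a α)) * RX A' a * RX B' b * hc
  have hright : ∀ β ∈ B'ᶜ, C ((-1) ^ (m + #B')) * sylTerm a b A' (insert β B') =
      C (sylCoeff a b A' B') * (RX A' a * RX B' b) * (C (w (.inr β)) * (X - C (b β))) := by
    intro β hβ
    have hc : C ((-1) ^ (m + #B')) * C (sylCoeff a b A' (insert β B')) =
        C (sylCoeff a b A' B') * C (w (.inr β)) := by
      rw [← map_mul, ← map_mul, neg_one_pow_mul_sylCoeff_insert_right hv A' (mem_compl.mp hβ)]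
    rw [sylTerm, RX_insert (mem_compl.mp hβ)]
    linear_combination (X - C (b β)) * RX A' a * RX B' b * hc
  simp only [sum_disjSum, Sum.elim_inl, Sum.elim_inr] at hres
  rw [mul_sum, mul_sum, sum_congr rfl hleft, sum_congr rfl hright, ← mul_sum, ← mul_sum,
    ← mul_add, hres, mul_zero]

lemma Syl_succ_left_add_Syl_succ_right {p q : ℕ}
    (hsize : p + q + 3 ≤ (m - p) + (n - q)) :
    C ((-1 : F) ^ p * (p + 1 : ℕ)) * Syl a b (p + 1) q +
      C ((-1 : F) ^ (m + q) * (q + 1 : ℕ)) * Syl a b p (q + 1) = 0 := by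
  have hleft : (p + 1) • Syl a b (p + 1) q = ∑ A ∈ powersetCard p univ,
      ∑ B ∈ powersetCard q univ, ∑ α ∈ Aᶜ, sylTerm a b (insert α A) B := by
    rw [Syl_eq_sum_sylTerm, smul_sum,
      sum_powersetCard_succ_nsmul p fun A => ∑ B ∈ powersetCard q univ, sylTerm a b A B]
    exact sum_congr rfl fun A _ => sum_comm
  have hright : (q + 1) • Syl a b p (q + 1) = ∑ A ∈ powersetCard p univ,
      ∑ B ∈ powersetCard q univ, ∑ β ∈ Bᶜ, sylTerm a b A (insert β B) := by
    simp_rw [Syl_eq_sum_sylTerm, smul_sum]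
    exact sum_congr rfl fun A _ => sum_powersetCard_succ_nsmul q (sylTerm a b A)
  simp only [map_mul, map_natCast, mul_assoc, ← nsmul_eq_mul, hleft, hright, mul_sum,
    ← sum_add_distrib]
  refine sum_eq_zero fun A hA => sum_eq_zero fun B hB => ?_
  rw [mem_powersetCard_univ] at hA hB
  rw [← mul_sum, ← mul_sum, ← hA, ← hB]
  refine signed_sum_sylTerm_insert_eq_zero hv A B ?_
  simp only [card_compl, Fintype.card_fin]
  omega

end Exchange

theorem Syl_eq_C_mul_Syl_zero_of_charZero {F : Type*} [Field F] [CharZero F] {m n : ℕ}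
    {a : Fin m → F} {b : Fin n → F} (hv : Function.Injective (Sum.elim a b)) {p q : ℕ}
    (hm : p + q < m) (hn : p + q < n) :
    Syl a b p q =
      C ((-1 : F) ^ (p * (m - (p + q))) * ((p + q).choose p : F)) * Syl a b 0 (p + q) := by
  induction p generalizing q with
  | zero => simp
  | succ p ih =>
    have hstep := Syl_succ_left_add_Syl_succ_right hv (p := p) (q := q) (by omega)
    rw [ih (q := q + 1) (by omega) (by omega), show p + (q + 1) = p + 1 + q by omega] at hstep
    have hC : C ((-1 : F) ^ p * (p + 1 : ℕ)) ≠ 0 := by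
      rw [Ne, C_eq_zero]
      exact mul_ne_zero (pow_ne_zero _ (neg_ne_zero.mpr one_ne_zero))
        (Nat.cast_ne_zero.mpr p.succ_ne_zero)
    have hch : (p + 1 + q).choose p * (q + 1) = (p + 1 + q).choose (p + 1) * (p + 1) := by
      rw [Nat.choose_succ_right_eq, show p + 1 + q - p = q + 1 by omega]
    have hs : (-1 : F) ^ (p + (p + 1) * (m - (p + 1 + q))) =
        (-1) ^ (m + q + 1 + p * (m - (p + 1 + q))) :=
      neg_one_pow_congr (by
        simp only [Nat.even_add, Nat.even_mul, Nat.even_sub hm.le, Nat.even_add_one]; tauto)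
    have hcoeff : C ((-1 : F) ^ p * (p + 1 : ℕ)) *
          C ((-1) ^ ((p + 1) * (m - (p + 1 + q))) * ((p + 1 + q).choose (p + 1) : F)) =
        -(C ((-1 : F) ^ (m + q) * (q + 1 : ℕ)) *
          C ((-1) ^ (p * (m - (p + 1 + q))) * ((p + 1 + q).choose p : F))) := by
      rw [← map_mul, ← map_mul, ← map_neg]
      congr 1
      have hchF := congrArg (Nat.cast (R := F)) hch
      push_cast at hchF ⊢
      linear_combination (p + 1 + q).choose (p + 1) * (p + 1 : F) * hs +
        (-1 : F) ^ (m + q) * (-1) ^ (p * (m - (p + 1 + q))) * hchF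
    refine mul_left_cancel₀ hC ?_
    linear_combination hstep - Syl a b 0 (p + 1 + q) * hcoeff

section RingHom
variable {R S : Type*} [CommRing R] [CommRing S] {m n : ℕ}

def sylRing (a : Fin m → R) (b : Fin n → R) (p q : ℕ) : R[X] :=
  ∑ A' ∈ powersetCard p univ, ∑ B' ∈ powersetCard q univ,
    C (RR A' B' a b * RR A'ᶜ B'ᶜ a b * Ring.inverse (RR A' A'ᶜ a a * RR B' B'ᶜ b b)) *
      RX A' a * RX B' b

lemma Syl_eq_sylRing {K : Type*} [Field K] (a : Fin m → K) (b : Fin n → K) (p q : ℕ) :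
    Syl a b p q = sylRing a b p q := by
  simp_rw [sylRing, Ring.inverse_eq_inv, ← div_eq_mul_inv]
  rfl

lemma map_ringInverse (φ : R →+* S) {u : R} (hu : IsUnit u) :
    φ (Ring.inverse u) = Ring.inverse (φ u) :=
  (hu.map φ).mul_left_cancel <| by
    rw [← map_mul, Ring.mul_inverse_cancel u hu, map_one, Ring.mul_inverse_cancel _ (hu.map φ)]

lemma map_sylRing (φ : R →+* S) {a : Fin m → R} {b : Fin n → R}
    (ha : ∀ A' : Finset (Fin m), IsUnit (RR A' A'ᶜ a a))
    (hb : ∀ B' : Finset (Fin n), IsUnit (RR B' B'ᶜ b b)) (p q : ℕ) :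
    (sylRing a b p q).map φ = sylRing (φ ∘ a) (φ ∘ b) p q := by
  simp only [sylRing, Polynomial.map_sum, Polynomial.map_mul, map_C, map_RX]
  refine sum_congr rfl fun A' _ => sum_congr rfl fun B' _ => ?_
  simp only [map_mul φ, map_ringInverse φ ((ha A').mul (hb B')), map_RR]

end RingHom

section Generic
variable {K : Type*} [Field K] {m n : ℕ} (a : Fin m → K) (b : Fin n → K)

def genericDenominators : Submonoid (MvPolynomial (Fin m ⊕ Fin n) ℤ) :=
  nonZeroDivisors _ ⊓ (IsUnit.submonoid K).comap (MvPolynomial.aeval (Sum.elim a b))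

def genericRoot (t : Fin m ⊕ Fin n) : Localization (genericDenominators a b) :=
  algebraMap (MvPolynomial (Fin m ⊕ Fin n) ℤ) _ (MvPolynomial.X t)

def genericToFractionRing :
    Localization (genericDenominators a b) →+* FractionRing (MvPolynomial (Fin m ⊕ Fin n) ℤ) :=
  IsLocalization.lift fun s : genericDenominators a b =>
    IsLocalization.map_units (FractionRing _) (⟨s.1, s.2.1⟩ : nonZeroDivisors _)

def genericEval : Localization (genericDenominators a b) →+* K :=
  IsLocalization.lift fun s : genericDenominators a b => s.2.2

lemma genericToFractionRing_injective : Function.Injective (genericToFractionRing a b) := by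
  refine (IsLocalization.lift_injective_iff _).mpr fun x y => ?_
  have hle : genericDenominators a b ≤ nonZeroDivisors _ := fun _ h => (Submonoid.mem_inf.mp h).1
  rw [(IsLocalization.injective (Localization (genericDenominators a b)) hle).eq_iff,
    (IsFractionRing.injective _ _).eq_iff]

lemma genericToFractionRing_comp_genericRoot_injective :
    Function.Injective (genericToFractionRing a b ∘ genericRoot a b) := by
  have : genericToFractionRing a b ∘ genericRoot a b = algebraMap _ _ ∘ MvPolynomial.X :=
    funext fun t => IsLocalization.lift_eq _ _
  rw [this]
  exact (IsFractionRing.injective _ _).comp MvPolynomial.X_injective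

lemma genericEval_comp_genericRoot : genericEval a b ∘ genericRoot a b = Sum.elim a b :=
  funext fun t => by simp [genericEval, genericRoot, IsLocalization.lift_eq]

lemma isUnit_RR_compl_genericRoot {ι : Type*} [Fintype ι] [DecidableEq ι]
    {f : ι → Fin m ⊕ Fin n} (hf : Function.Injective (Sum.elim a b ∘ f)) (S : Finset ι) :
    IsUnit (RR S Sᶜ (genericRoot a b ∘ f) (genericRoot a b ∘ f)) := by
  have hmem : RR S Sᶜ (MvPolynomial.X ∘ f) (MvPolynomial.X ∘ f) ∈ genericDenominators a b := by
    refine Submonoid.mem_inf.mpr ⟨mem_nonZeroDivisors_of_ne_zero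
      (RR_compl_ne_zero (MvPolynomial.X_injective.comp hf.of_comp) S), ?_⟩
    rw [Submonoid.mem_comap, IsUnit.mem_submonoid_iff, map_RR, isUnit_iff_ne_zero]
    simpa [Function.comp_def] using RR_compl_ne_zero hf S
  simpa [map_RR, Function.comp_def, genericRoot] using
    IsLocalization.map_units (Localization (genericDenominators a b)) ⟨_, hmem⟩

end Generic

lemma sylRing_genericRoot_eq {K : Type*} [Field K] {m n p q : ℕ} (hdm : p + q < m)
    (hdn : p + q < n) {a : Fin m → K} (ha : Function.Injective a) {b : Fin n → K}
    (hb : Function.Injective b) :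
    sylRing (genericRoot a b ∘ Sum.inl) (genericRoot a b ∘ Sum.inr) p q =
      C ((-1 : Localization (genericDenominators a b)) ^ (p * (m - (p + q))) *
          ((p + q).choose p : Localization (genericDenominators a b))) *
        sylRing (genericRoot a b ∘ Sum.inl) (genericRoot a b ∘ Sum.inr) 0 (p + q) := by
  have hx := isUnit_RR_compl_genericRoot a b (f := Sum.inl) (by simpa using ha)
  have hy := isUnit_RR_compl_genericRoot a b (f := Sum.inr) (by simpa using hb)
  have hv : Function.Injective (Sum.elim (genericToFractionRing a b ∘ genericRoot a b ∘ Sum.inl)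
      (genericToFractionRing a b ∘ genericRoot a b ∘ Sum.inr)) := by
    simpa only [← Function.comp_assoc, Sum.elim_comp_inl_inr] using
      genericToFractionRing_comp_genericRoot_injective a b
  refine map_injective _ (genericToFractionRing_injective a b) ?_
  rw [map_sylRing _ hx hy, Polynomial.map_mul, map_C, map_sylRing _ hx hy, ← Syl_eq_sylRing,
    ← Syl_eq_sylRing]
  simpa using Syl_eq_C_mul_Syl_zero_of_charZero hv hdm hdn

theorem syl_double_to_single_general (K : Type*) [Field K] (m n p q : ℕ)
    (hdm : p + q < m) (hdn : p + q < n)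
    (a : Fin m → K) (ha : Function.Injective a)
    (b : Fin n → K) (hb : Function.Injective b) :
    Syl a b p q =
      Polynomial.C ((-1 : K) ^ (p * (m - (p + q))) * ((p + q).choose p : K)) *
        Syl a b 0 (p + q) := by
  have hx := isUnit_RR_compl_genericRoot a b (f := Sum.inl) (by simpa using ha)
  have hy := isUnit_RR_compl_genericRoot a b (f := Sum.inr) (by simpa using hb)
  have h := congrArg (map (genericEval a b)) (sylRing_genericRoot_eq hdm hdn ha hb)
  rw [map_sylRing _ hx hy, Polynomial.map_mul, map_C, map_sylRing _ hx hy] at h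
  simpa [Syl_eq_sylRing, ← Function.comp_assoc, genericEval_comp_genericRoot] using h

/-- For `0 ≤ p ≤ m`, `0 ≤ q ≤ n` and `d := p+q ≤ min{m-1,n-1}`,
`Syl_{p,q}(A,B) = (-1)^{p(m-d)} · binom(d,p) · Syl_{0,d}(A,B)`. -/
theorem syl_double_to_single (K : Type*) [Field K] (m n p q : ℕ)
    (hp : p ≤ m) (hq : q ≤ n) (hdm : p + q < m) (hdn : p + q < n)
    (a : Fin m → K) (ha : Function.Injective a)
    (b : Fin n → K) (hb : Function.Injective b) :
    Syl a b p q =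
      Polynomial.C ((-1 : K) ^ (p * (m - (p + q))) * ((p + q).choose p : K)) *
        Syl a b 0 (p + q) :=
  syl_double_to_single_general K m n p q hdm hdn a ha b hb

end
end

section
/- Let 0 ≤ p ≤ m, 0 ≤ q ≤ n and set d := p+q, and assume m ≤ d ≤ n−1. Fix A' ⊆ A with |A'| = p, let X = (x₁,…,x_{n−q}) be n−q indeterminates, and define H_{A'}(X) := Σ_{B'⊆B, |B'|=q} R(B∖B', A∖A') · R(X,B') / R(B∖B', B'). Then H_{A'}(X) = f_{A∖A'}(x₁)···f_{A∖A'}(x_{n−q}), where f_{A∖A'}(x) := ∏_{α∈A∖A'}(x − α). -/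
/-!
Write `f := ∏_{α ∈ A∖A'} (x - α)`, of degree `m - p ≤ q`, and `g_T := ∏_{β ∈ T} (x - β)`.
For any set `B` of `q + r` points the identity reads
`∏_s f(x_s) = Σ_{T ⊆ B, |T| = q} c_T ∏_s g_T(x_s)` with `c_T = ∏_{β ∈ B∖T} f(β) / g_T(β)`,
and it is proved by induction on `r`. As polynomials in the first variable both sides have
degree `≤ q < |B|`, so it suffices to compare them at the points `β ∈ B`: there the terms with
`β ∈ T` vanish, and the others are `f(β)` times the terms of the identity for `B ∖ {β}` in the
remaining variables.
-/

noncomputable section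

open Polynomial Finset Lagrange

section

variable {K ι : Type*} [Field K]

theorem aeval_nodal {R : Type*} [CommRing R] [Algebra K R] (x : R) (t : Finset ι) (v : ι → K) :
    aeval x (nodal t v) = ∏ i ∈ t, (x - algebraMap K R (v i)) := by
  simp [nodal, map_prod]

variable [DecidableEq ι]

def interpCoeff (f : K[X]) (v : ι → K) (s t : Finset ι) : K :=
  ∏ i ∈ s \ t, f.eval (v i) / (nodal t v).eval (v i)

theorem interpCoeff_nodal {κ : Type*} (u : Finset κ) (w : κ → K) (v : ι → K) (s t : Finset ι) :
    interpCoeff (nodal u w) v s t = RR (s \ t) u v w / RR (s \ t) t v v := by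
  simp only [interpCoeff, RR, prod_div_distrib, eval_nodal]

theorem interpCoeff_mul_eval_nodal (f : K[X]) {v : ι → K} {s t : Finset ι} {i : ι}
    (hv : Set.InjOn v s) (hi : i ∈ s) (ht : t ⊆ s.erase i) :
    interpCoeff f v s t * (nodal t v).eval (v i) =
      f.eval (v i) * interpCoeff f v (s.erase i) t := by
  have hit : i ∈ s \ t := mem_sdiff.2 ⟨hi, fun h => notMem_erase i s (ht h)⟩
  have hne : (nodal t v).eval (v i) ≠ 0 := eval_nodal_not_at_node fun j hj hij =>
    ne_of_mem_erase (ht hj) (hv (mem_of_mem_erase (ht hj)) hi hij.symm)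
  rw [interpCoeff, interpCoeff, ← mul_prod_erase _ _ hit, erase_sdiff_comm, mul_right_comm,
    div_mul_cancel₀ _ hne]

theorem sum_interpCoeff_mul_eval_nodal_smul {M : Type*} [AddCommMonoid M] [Module K M]
    (f : K[X]) {v : ι → K} {s : Finset ι} {i : ι} (hv : Set.InjOn v s) (hi : i ∈ s) (q : ℕ)
    (y : Finset ι → M) :
    ∑ t ∈ s.powersetCard q, (interpCoeff f v s t * (nodal t v).eval (v i)) • y t =
      f.eval (v i) • ∑ t ∈ (s.erase i).powersetCard q, interpCoeff f v (s.erase i) t • y t := by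
  rw [← sum_subset (powersetCard_mono (erase_subset i s)), smul_sum]
  · refine sum_congr rfl fun t ht => ?_
    rw [interpCoeff_mul_eval_nodal f hv hi (mem_powersetCard.1 ht).1, mul_smul]
  · intro t ht hti
    have hit : i ∈ t := by
      by_contra h
      exact hti (mem_powersetCard.2 ⟨subset_erase.2 ⟨(mem_powersetCard.1 ht).1, h⟩,
        (mem_powersetCard.1 ht).2⟩)
    rw [eval_nodal_at_node hit, mul_zero, zero_smul]

theorem sum_interpCoeff_smul_prod_aeval_nodal {R : Type*} [CommRing R] [IsDomain R] [Algebra K R]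
    {f : K[X]} {q : ℕ} (hf : f.natDegree ≤ q) {v : ι → K} :
    ∀ {r : ℕ} {s : Finset ι}, Set.InjOn v s → #s = q + r → ∀ x : Fin r → R,
      ∑ t ∈ s.powersetCard q, interpCoeff f v s t • ∏ k, aeval (x k) (nodal t v) =
        ∏ k, aeval (x k) f
  | 0, s, _, hs, x => by
    rw [add_zero] at hs
    simp [← hs, interpCoeff]
  | r + 1, s, hv, hs, x => by
    -- the identity with `x 0` replaced by the indeterminate of `R[X]`
    set y : Finset ι → R := fun t => ∏ k : Fin r, aeval (x k.succ) (nodal t v)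
    have hpoly : ∑ t ∈ s.powersetCard q,
          interpCoeff f v s t • ((nodal t v).map (algebraMap K R) * C (y t)) =
        f.map (algebraMap K R) * C (∏ k : Fin r, aeval (x k.succ) f) := by
      have hv' : Set.InjOn (algebraMap K R ∘ v) s :=
        (FaithfulSMul.algebraMap_injective K R).comp_injOn hv
      have hdeg : ∀ p : R[X], p.natDegree ≤ q → p.degree < #s := fun p hp =>
        (degree_le_of_natDegree_le hp).trans_lt (by rw [hs]; exact_mod_cast (by omega : q < q + (r + 1)))
      refine eq_of_degrees_lt_of_eval_index_eq s hv' (hdeg _ ?_) (hdeg _ ?_) fun i hi => ?_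
      · refine natDegree_sum_le_of_forall_le _ _ fun t ht => ?_
        refine (natDegree_smul_le _ _).trans ((natDegree_mul_C_le _ _).trans ?_)
        refine natDegree_map_le.trans ?_
        rw [natDegree_nodal, (mem_powersetCard.1 ht).2]
      · exact (natDegree_mul_C_le _ _).trans (natDegree_map_le.trans hf)
      · have IH := sum_interpCoeff_smul_prod_aeval_nodal hf (hv.mono (erase_subset i s))
          (by rw [card_erase_of_mem hi, hs]; rfl) (fun k => x k.succ)
        simp only [Function.comp_apply, eval_finsetSum, eval_smul, eval_mul, eval_C,
          eval_map_algebraMap, aeval_algebraMap_apply_eq_algebraMap_eval]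
        simp_rw [← Algebra.smul_def, smul_smul]
        rw [sum_interpCoeff_mul_eval_nodal_smul f hv hi, IH]
    simpa only [Fin.prod_univ_succ, eval_finsetSum, eval_smul, eval_mul, eval_C,
      eval_map_algebraMap] using congrArg (eval (x 0)) hpoly

end

theorem H_eq_prod_general (K : Type*) [Field K] (m n p q : ℕ)
    (hq : q ≤ n) (hmd : m ≤ p + q)
    (a : Fin m → K)
    (b : Fin n → K) (hb : Function.Injective b)
    (A' : Finset (Fin m)) (hA' : A'.card = p) :
    ∑ B' ∈ Finset.powersetCard q (Finset.univ : Finset (Fin n)),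
      MvPolynomial.C (RR B'ᶜ A'ᶜ b a / RR B'ᶜ B' b b) *
        ∏ s : Fin (n - q), ∏ j ∈ B', (MvPolynomial.X s - MvPolynomial.C (b j))
    = ∏ s : Fin (n - q), ∏ i ∈ A'ᶜ, (MvPolynomial.X s - MvPolynomial.C (a i)) := by
  have hdeg : (nodal A'ᶜ a).natDegree ≤ q := by
    rw [natDegree_nodal, card_compl, hA', Fintype.card_fin]
    omega
  have key := sum_interpCoeff_smul_prod_aeval_nodal (r := n - q) hdeg hb.injOn
    (by rw [card_univ, Fintype.card_fin]; omega) (MvPolynomial.X (R := K))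
  simpa only [aeval_nodal, MvPolynomial.algebraMap_eq, interpCoeff_nodal, ← compl_eq_univ_sdiff,
    MvPolynomial.smul_eq_C_mul] using key

/-- For `0 ≤ p ≤ m`, `0 ≤ q ≤ n`, `d := p+q` with `m ≤ d ≤ n-1`, and `A' ⊆ A` with
`|A'| = p`, the polynomial
`H_{A'}(X) := Σ_{B'⊆B,|B'|=q} R(B∖B',A∖A') · R(X,B') / R(B∖B',B')`
equals `f_{A∖A'}(x₁) ⋯ f_{A∖A'}(x_{n-q})`, where `f_{A∖A'}(x) := ∏_{α∈A∖A'} (x-α)`. -/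
theorem H_eq_prod (K : Type*) [Field K] (m n p q : ℕ)
    (hp : p ≤ m) (hq : q ≤ n) (hmd : m ≤ p + q) (hdn : p + q < n)
    (a : Fin m → K) (ha : Function.Injective a)
    (b : Fin n → K) (hb : Function.Injective b)
    (A' : Finset (Fin m)) (hA' : A'.card = p) :
    ∑ B' ∈ Finset.powersetCard q (Finset.univ : Finset (Fin n)),
      MvPolynomial.C (RR B'ᶜ A'ᶜ b a / RR B'ᶜ B' b b) *
        ∏ s : Fin (n - q), ∏ j ∈ B', (MvPolynomial.X s - MvPolynomial.C (b j))
    = ∏ s : Fin (n - q), ∏ i ∈ A'ᶜ, (MvPolynomial.X s - MvPolynomial.C (a i)) :=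
  H_eq_prod_general K m n p q hq hmd a b hb A' hA'

end
end
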